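/- Let L ∈ 𝐋, V, W ∈ 𝐕(L) and w ∈ [0,1). Let (uₙ)ₙ be a sequence in [0,1] converging to 0 and, for each n, let Oⁿ ∈ 𝐎*(L+uₙV, L+wW). Then every accumulation point of the sequence (Oⁿ)ₙ with respect to the Frobenius norm lies in 𝐎*(L,L). -/

import Mathlib

open Matrix Filter Topology

/-- Square matrices of size `dT × dT`, indexed by blocks: index `(t, i)` is
row/column `i` within block `t`. -/
abbrev Mat (d T : ℕ) := Matrix (Fin T × Fin d) (Fin T × Fin d) ℝ

/-- The `t`-th diagonal `d × d` block of a `dT × dT` matrix. -/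
def blk {d T : ℕ} (A : Mat d T) (t : Fin T) : Matrix (Fin d) (Fin d) ℝ :=
  fun i j => A (t, i) (t, j)

/-- The `t`-th block column of a `dT × dT` matrix, a `dT × d` matrix. -/
def colBlk {d T : ℕ} (A : Mat d T) (t : Fin T) : Matrix (Fin T × Fin d) (Fin d) ℝ :=
  fun p j => A p (t, j)

/-- Membership in `𝐋`: block lower triangular matrices. -/
def memL {d T : ℕ} (A : Mat d T) : Prop :=
  ∀ (t s : Fin T) (i j : Fin d), t < s → A (t, i) (s, j) = 0

/-- Membership in `𝐎`: block diagonal matrices with orthogonal `d × d` diagonal blocks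
(equivalently: block diagonal and orthogonal). -/
def memO {d T : ℕ} (O : Mat d T) : Prop :=
  (∀ (t s : Fin T) (i j : Fin d), t ≠ s → O (t, i) (s, j) = 0) ∧ Oᵀ * O = 1

/-- The Frobenius norm of a real matrix. -/
noncomputable def frobNorm {m n : Type*} [Fintype m] [Fintype n] (A : Matrix m n ℝ) : ℝ :=
  Real.sqrt (∑ i, ∑ j, (A i j) ^ 2)

/-- The Frobenius inner product of two real matrices. -/
noncomputable def frobInner {m n : Type*} [Fintype m] [Fintype n] (A B : Matrix m n ℝ) : ℝ :=
  ∑ i, ∑ j, A i j * B i j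

/-- The adapted Bures–Wasserstein distance `d_ABW(L, M) = inf_{O ∈ 𝐎} ‖L - M O‖_F`. -/
noncomputable def dABW {d T : ℕ} (L M : Mat d T) : ℝ :=
  sInf {r : ℝ | ∃ O : Mat d T, memO O ∧ r = frobNorm (L - M * O)}

/-- The set `𝐎*(L, M)` of optimizers of `inf_{O ∈ 𝐎} ‖L - M O‖_F`. -/
noncomputable def OStar {d T : ℕ} (L M : Mat d T) : Set (Mat d T) :=
  {O | memO O ∧ frobNorm (L - M * O) = dABW L M}

/-- The set `𝐕(L) = {M P - L : M ∈ 𝐋, P ∈ 𝐎*(L, M)}`. -/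
noncomputable def VSet {d T : ℕ} (L : Mat d T) : Set (Mat d T) :=
  {V | ∃ M P : Mat d T, memL M ∧ P ∈ OStar L M ∧ V = M * P - L}

/-- The set `𝒱(L) = {V ∈ 𝐋 : (Vᵀ L)_{t,t} is symmetric for all t}`. -/
def calV {d T : ℕ} (L : Mat d T) : Set (Mat d T) :=
  {V | memL V ∧ ∀ t : Fin T, (blk (Vᵀ * L) t).IsSymm}

/-- The set `𝐋^reg = {L ∈ 𝐋 : (Lᵀ L)_{t,t} is positive definite for all t}`. -/
def LReg {d T : ℕ} : Set (Mat d T) :=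
  {L | memL L ∧ ∀ t : Fin T, (blk (Lᵀ * L) t).PosDef}

/-- The sum of the singular values of a real square matrix `A`,
i.e. the trace of the positive semidefinite square root of `Aᵀ A`. -/
noncomputable def svSum {n : ℕ} (A : Matrix (Fin n) (Fin n) ℝ) : ℝ :=
  ((Matrix.posSemidef_conjTranspose_mul_self A).1.eigenvectorUnitary.1 *
    Matrix.diagonal (((↑) : ℝ → ℝ) ∘ (Real.sqrt ·) ∘
      (Matrix.posSemidef_conjTranspose_mul_self A).1.eigenvalues) *
    (star (Matrix.posSemidef_conjTranspose_mul_self A).1.eigenvectorUnitary :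
      Matrix (Fin n) (Fin n) ℝ)).trace

/-- The operator norm of a real matrix: the supremum of the euclidean norm `‖A x‖₂`
over the euclidean unit ball. -/
noncomputable def opNorm {m n : Type*} [Fintype m] [Fintype n] (A : Matrix m n ℝ) : ℝ :=
  sSup {r : ℝ | ∃ x : n → ℝ, (∑ j, (x j) ^ 2) ≤ 1 ∧ r = Real.sqrt (∑ i, (A.mulVec x i) ^ 2)}

/-!
Optimality of `O` for `(X, Y)` is a family of non-strict inequalities
`‖X - Y O‖_F ≤ ‖X - Y Q‖_F`, `Q ∈ 𝐎`, which pass to the limit; so the accumulation point `O`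
lies in `𝐎*(L, L + wW)`. For orthogonal `O`, `‖X - Y O‖_F² = ‖X‖_F² - 2 tr (Xᵀ Y O) + ‖Y‖_F²`,
so optimality means maximizing `tr (Xᵀ Y O)`. Write `W = M P - L` with `P ∈ 𝐎*(L, M)`, so that
`L + wW = (1 - w) L + w M P`. Testing `O` against `1`, and `P` against `P O`, gives
`(1 - w) tr (Lᵀ L O) ≥ (1 - w) tr (Lᵀ L)`, hence `‖L - L O‖_F = 0` since `w < 1`.
-/

section Frobenius

variable {m n : Type*} [Fintype m] [Fintype n]

lemma frobNorm_nonneg (A : Matrix m n ℝ) : 0 ≤ frobNorm A :=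
  Real.sqrt_nonneg _

lemma frobNorm_sq (A : Matrix m n ℝ) : frobNorm A ^ 2 = (Aᵀ * A).trace := by
  rw [frobNorm, Real.sq_sqrt (by positivity), Finset.sum_comm]
  simp [Matrix.trace, Matrix.mul_apply, sq]

lemma abs_apply_le_frobNorm (A : Matrix m n ℝ) (i : m) (j : n) : |A i j| ≤ frobNorm A := by
  refine Real.abs_le_sqrt ?_
  calc A i j ^ 2 ≤ ∑ j', A i j' ^ 2 :=
        Finset.single_le_sum (fun _ _ => sq_nonneg _) (Finset.mem_univ j)
    _ ≤ ∑ i', ∑ j', A i' j' ^ 2 :=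
        Finset.single_le_sum (f := fun i' => ∑ j', A i' j' ^ 2)
          (fun _ _ => by positivity) (Finset.mem_univ i)

lemma continuous_frobNorm : Continuous (frobNorm : Matrix m n ℝ → ℝ) := by
  unfold frobNorm
  fun_prop

lemma tendsto_of_tendsto_frobNorm_sub {ι : Type*} {l : Filter ι} {A : ι → Matrix m n ℝ}
    {B : Matrix m n ℝ} (h : Tendsto (fun k => frobNorm (A k - B)) l (𝓝 0)) :
    Tendsto A l (𝓝 B) := by
  refine tendsto_pi_nhds.2 fun i => tendsto_pi_nhds.2 fun j => ?_
  rw [← tendsto_sub_nhds_zero_iff]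
  exact squeeze_zero_norm (fun k => abs_apply_le_frobNorm (A k - B) i j) h

variable [DecidableEq n]

lemma frobNorm_sub_mul_sq (X Y : Matrix m n ℝ) {O : Matrix n n ℝ} (hO : Oᵀ * O = 1) :
    frobNorm (X - Y * O) ^ 2 = (Xᵀ * X).trace - 2 * (Xᵀ * Y * O).trace + (Yᵀ * Y).trace := by
  have hO' : O * Oᵀ = 1 := mul_eq_one_comm.mp hO
  have hcross : (Oᵀ * Yᵀ * X).trace = (Xᵀ * Y * O).trace := by
    rw [← Matrix.trace_transpose]
    simp [Matrix.transpose_mul, Matrix.mul_assoc]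
  have hquad : (Oᵀ * Yᵀ * Y * O).trace = (Yᵀ * Y).trace := by
    rw [Matrix.trace_mul_comm, ← Matrix.mul_assoc, ← Matrix.mul_assoc, hO', Matrix.one_mul]
  rw [frobNorm_sq, Matrix.transpose_sub, Matrix.transpose_mul]
  simp only [Matrix.sub_mul, Matrix.mul_sub, Matrix.trace_sub, ← Matrix.mul_assoc, hcross, hquad]
  ring

lemma frobNorm_sub_mul_le_iff (X Y : Matrix m n ℝ) {O Q : Matrix n n ℝ} (hO : Oᵀ * O = 1)
    (hQ : Qᵀ * Q = 1) :
    frobNorm (X - Y * O) ≤ frobNorm (X - Y * Q) ↔ (Xᵀ * Y * Q).trace ≤ (Xᵀ * Y * O).trace := by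
  rw [← pow_le_pow_iff_left₀ (frobNorm_nonneg _) (frobNorm_nonneg _) two_ne_zero,
    frobNorm_sub_mul_sq X Y hO, frobNorm_sub_mul_sq X Y hQ]
  constructor <;> intro h <;> linarith

end Frobenius

section Optimizers

variable {d T : ℕ}

lemma memO_one : memO (1 : Mat d T) :=
  ⟨fun _ _ _ _ hts => Matrix.one_apply_ne (by simp [hts]), by simp⟩

lemma memO_mul {A B : Mat d T} (hA : memO A) (hB : memO B) : memO (A * B) := by
  refine ⟨fun t s i j hts => ?_, ?_⟩
  · refine (Matrix.mul_apply ..).trans (Finset.sum_eq_zero fun ⟨r, k⟩ _ => ?_)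
    by_cases hr : r = t
    · subst hr
      rw [hB.1 r s k j hts, mul_zero]
    · rw [hA.1 t r i k (Ne.symm hr), zero_mul]
  · rw [Matrix.transpose_mul, Matrix.mul_assoc, ← Matrix.mul_assoc Aᵀ, hA.2, Matrix.one_mul, hB.2]

lemma isClosed_setOf_memO : IsClosed {O : Mat d T | memO O} := by
  simp only [memO, Set.ofPred_and, Set.ofPred_forall]
  refine IsClosed.inter ?_ (isClosed_eq (by fun_prop) continuous_const)
  exact isClosed_iInter fun t => isClosed_iInter fun s => isClosed_iInter fun i =>
    isClosed_iInter fun j => isClosed_iInter fun _ => isClosed_eq (by fun_prop) continuous_const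

lemma dABW_le {X Y O : Mat d T} (hO : memO O) : dABW X Y ≤ frobNorm (X - Y * O) :=
  csInf_le ⟨0, fun _ ⟨_, _, hr⟩ => hr ▸ frobNorm_nonneg _⟩ ⟨O, hO, rfl⟩

lemma frobNorm_le_of_mem_OStar {X Y O Q : Mat d T} (hO : O ∈ OStar X Y) (hQ : memO Q) :
    frobNorm (X - Y * O) ≤ frobNorm (X - Y * Q) :=
  hO.2 ▸ dABW_le hQ

lemma mem_OStar_of_forall_le {X Y O : Mat d T} (hO : memO O)
    (h : ∀ Q, memO Q → frobNorm (X - Y * O) ≤ frobNorm (X - Y * Q)) : O ∈ OStar X Y :=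
  ⟨hO, le_antisymm (le_csInf ⟨_, O, hO, rfl⟩ fun _ ⟨Q, hQ, hr⟩ => hr ▸ h Q hQ) (dABW_le hO)⟩

lemma trace_le_of_mem_OStar {X Y O Q : Mat d T} (hO : O ∈ OStar X Y) (hQ : memO Q) :
    (Xᵀ * Y * Q).trace ≤ (Xᵀ * Y * O).trace :=
  (frobNorm_sub_mul_le_iff X Y hO.1.2 hQ.2).1 (frobNorm_le_of_mem_OStar hO hQ)

lemma mem_OStar_of_tendsto {ι : Type*} {l : Filter ι} [l.NeBot] {Xs Os : ι → Mat d T}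
    {X Y O : Mat d T} (hX : Tendsto Xs l (𝓝 X)) (hOs : ∀ k, Os k ∈ OStar (Xs k) Y)
    (hO : Tendsto Os l (𝓝 O)) : O ∈ OStar X Y := by
  refine mem_OStar_of_forall_le
    (isClosed_setOf_memO.mem_of_tendsto hO (Eventually.of_forall fun k => (hOs k).1)) fun Q hQ => ?_
  have hcont {P : ι → Mat d T} {P₀ : Mat d T} (hP : Tendsto P l (𝓝 P₀)) :
      Tendsto (fun k => frobNorm (Xs k - Y * P k)) l (𝓝 (frobNorm (X - Y * P₀))) :=
    (continuous_frobNorm.tendsto _).comp (hX.sub (tendsto_const_nhds.mul hP))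
  exact le_of_tendsto_of_tendsto' (hcont hO) (hcont tendsto_const_nhds)
    fun k => frobNorm_le_of_mem_OStar (hOs k) hQ

lemma mem_OStar_self_of_mem_OStar_interpolate {L M P O : Mat d T} {w : ℝ} (hw₀ : 0 ≤ w)
    (hw₁ : w < 1) (hP : P ∈ OStar L M) (hO : O ∈ OStar L (L + w • (M * P - L))) :
    O ∈ OStar L L := by
  have h₁ := trace_le_of_mem_OStar hO memO_one
  have h₂ := trace_le_of_mem_OStar hP (memO_mul hP.1 hO.1)
  simp only [Matrix.mul_add, Matrix.mul_smul, Matrix.mul_sub, Matrix.add_mul, Matrix.smul_mul,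
    Matrix.sub_mul, Matrix.mul_one, Matrix.trace_add, Matrix.trace_smul, Matrix.trace_sub,
    smul_eq_mul, ← Matrix.mul_assoc] at h₁ h₂
  have hLO : (Lᵀ * L * 1).trace ≤ (Lᵀ * L * O).trace := by
    rw [Matrix.mul_one]
    nlinarith [mul_nonneg hw₀ (sub_nonneg.2 h₂)]
  have hzero : frobNorm (L - L * O) ≤ 0 := by
    simpa [frobNorm] using (frobNorm_sub_mul_le_iff L L hO.1.2 memO_one.2).2 hLO
  exact mem_OStar_of_forall_le hO.1 fun Q _ => hzero.trans (frobNorm_nonneg _)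

end Optimizers

theorem stmt17_general (d T : ℕ) (L V W : Mat d T)
    (hW : W ∈ VSet L)
    (w : ℝ) (hw : w ∈ Set.Ico (0 : ℝ) 1)
    (u : ℕ → ℝ)
    (hulim : Filter.Tendsto u Filter.atTop (nhds 0))
    (Oseq : ℕ → Mat d T) (hO : ∀ n, Oseq n ∈ OStar (L + u n • V) (L + w • W))
    (Olim : Mat d T) (φ : ℕ → ℕ) (hφ : StrictMono φ)
    (hlim : Filter.Tendsto (fun n => frobNorm (Oseq (φ n) - Olim)) Filter.atTop (nhds 0)) :
    Olim ∈ OStar L L := by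
  obtain ⟨M, P, -, hP, rfl⟩ := hW
  have hperturb : Tendsto (fun n => L + u (φ n) • V) atTop (𝓝 L) := by
    simpa using tendsto_const_nhds.add ((hulim.comp hφ.tendsto_atTop).smul_const V)
  exact mem_OStar_self_of_mem_OStar_interpolate hw.1 hw.2 hP
    (mem_OStar_of_tendsto hperturb (fun n => hO (φ n)) (tendsto_of_tendsto_frobNorm_sub hlim))

/-- every accumulation point (with respect to the Frobenius norm) of a sequence
of optimizers `Oⁿ ∈ 𝐎*(L + uₙV, L + wW)` with `uₙ → 0` lies in `𝐎*(L,L)`. -/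
theorem stmt17 (d T : ℕ) (hd : 0 < d) (hT : 0 < T) (L V W : Mat d T)
    (hL : memL L) (hV : V ∈ VSet L) (hW : W ∈ VSet L)
    (w : ℝ) (hw : w ∈ Set.Ico (0 : ℝ) 1)
    (u : ℕ → ℝ) (hu : ∀ n, u n ∈ Set.Icc (0 : ℝ) 1)
    (hulim : Filter.Tendsto u Filter.atTop (nhds 0))
    (Oseq : ℕ → Mat d T) (hO : ∀ n, Oseq n ∈ OStar (L + u n • V) (L + w • W))
    (Olim : Mat d T) (φ : ℕ → ℕ) (hφ : StrictMono φ)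
    (hlim : Filter.Tendsto (fun n => frobNorm (Oseq (φ n) - Olim)) Filter.atTop (nhds 0)) :
    Olim ∈ OStar L L :=
  stmt17_general d T L V W hW w hw u hulim Oseq hO Olim φ hφ hlim
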